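/- For every λ > 0, the function x ↦ D_{-λ}(x) is differentiable on ℝ and its derivative satisfies d/dx D_{-λ}(x) = −(x/2)·D_{-λ}(x) − λ·D_{-λ-1}(x) for all x ∈ ℝ. -/

import Mathlib

/-!
Differentiate under the integral sign: for `y` within distance 1 of `x`, the `y`-derivative
`-t^λ e^{-y t - t²/2}` of the integrand is dominated by the integrable
`t^λ e^{(|x|+1) t - t²/2}`.
Bringing down the factor `-t` raises the exponent of `t` by one, so the derivative of the integral
is minus the integral for `λ + 1`, and `Γ(λ + 1) = λ Γ(λ)` turns it into `-λ D_{-λ-1}`. The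
Gaussian prefactor `e^{-x²/4}` contributes `-(x/2) D_{-λ}` by the product rule.
-/

open MeasureTheory Real

/-- The parabolic cylinder function `D_{-λ}(x)`, defined for `λ > 0` by
`D_{-λ}(x) = (1/Γ(λ)) · e^{-x²/4} · ∫₀^∞ t^(λ-1) e^{-x t - t²/2} dt`.
Here `parabolicCylinderD l x` denotes `D_{-l}(x)`. -/
noncomputable def parabolicCylinderD (l x : ℝ) : ℝ :=
  (1 / Real.Gamma l) * Real.exp (-x ^ 2 / 4) *
    ∫ t in Set.Ioi (0 : ℝ), t ^ (l - 1) * Real.exp (-x * t - t ^ 2 / 2)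

lemma integrableOn_rpow_mul_exp_mul_sub_mul_sq {s b : ℝ} (hs : -1 < s) (hb : 0 < b) (c : ℝ) :
    IntegrableOn (fun t : ℝ => t ^ s * exp (c * t - b * t ^ 2)) (Set.Ioi 0) := by
  -- completing the square: `c t - b t² ≤ c² / (2b) - (b/2) t²`
  refine ((integrableOn_rpow_mul_exp_neg_mul_sq (half_pos hb) hs).const_mul
    (exp (c ^ 2 / (2 * b)))).mono' (by fun_prop) ?_
  filter_upwards [ae_restrict_mem measurableSet_Ioi] with t (ht : 0 < t)
  have hsq : c * t - b * t ^ 2 = c ^ 2 / (2 * b) + -(b / 2) * t ^ 2 - b / 2 * (t - c / b) ^ 2 := by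
    field_simp; ring
  have hle : c * t - b * t ^ 2 ≤ c ^ 2 / (2 * b) + -(b / 2) * t ^ 2 := by
    rw [hsq]; nlinarith [mul_nonneg hb.le (sq_nonneg (t - c / b))]
  rw [norm_of_nonneg (by positivity), mul_left_comm, ← exp_add]
  gcongr

noncomputable def parabolicCylinderIntegral (l x : ℝ) : ℝ :=
  ∫ t in Set.Ioi (0 : ℝ), t ^ (l - 1) * exp (-x * t - t ^ 2 / 2)

lemma integrableOn_parabolicCylinderIntegrand {l : ℝ} (hl : 0 < l) (x : ℝ) :
    IntegrableOn (fun t : ℝ => t ^ (l - 1) * exp (-x * t - t ^ 2 / 2)) (Set.Ioi 0) := by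
  refine (integrableOn_rpow_mul_exp_mul_sub_mul_sq (s := l - 1) (by linarith) one_half_pos (-x))
    |>.congr_fun (fun t _ => ?_) measurableSet_Ioi
  ring_nf

lemma hasDerivAt_parabolicCylinderIntegral {l : ℝ} (hl : 0 < l) (x : ℝ) :
    HasDerivAt (parabolicCylinderIntegral l) (-parabolicCylinderIntegral (l + 1) x) x := by
  have hbound : IntegrableOn (fun t : ℝ => t ^ l * exp ((|x| + 1) * t - 1 / 2 * t ^ 2))
      (Set.Ioi 0) := integrableOn_rpow_mul_exp_mul_sub_mul_sq (by linarith) one_half_pos _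
  have key := hasDerivAt_integral_of_dominated_loc_of_deriv_le
    (μ := volume.restrict (Set.Ioi 0)) (F := fun y t => t ^ (l - 1) * exp (-y * t - t ^ 2 / 2))
    (F' := fun y t => -(t ^ l * exp (-y * t - t ^ 2 / 2)))
    (Metric.ball_mem_nhds x one_pos) (.of_forall fun y => by fun_prop)
    (integrableOn_parabolicCylinderIntegrand hl x) (by fun_prop) ?_ hbound ?_
  · rw [parabolicCylinderIntegral, add_sub_cancel_right, ← integral_neg]
    exact key.2
  · filter_upwards [ae_restrict_mem measurableSet_Ioi] with t (ht : 0 < t) y hy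
    have hyx : -y ≤ |x| + 1 := by
      rw [Metric.mem_ball, Real.dist_eq] at hy
      linarith [neg_le_abs y, abs_sub_abs_le_abs_sub y x]
    rw [norm_neg, norm_of_nonneg (by positivity)]
    gcongr
    nlinarith
  · filter_upwards [ae_restrict_mem measurableSet_Ioi] with t (ht : 0 < t) y _
    have hexp : HasDerivAt (fun z : ℝ => exp (-z * t - t ^ 2 / 2))
        (exp (-y * t - t ^ 2 / 2) * -t) y :=
      (((hasDerivAt_id y).neg.mul_const t).sub_const _).exp.congr_deriv (by simp)
    refine (hexp.const_mul (t ^ (l - 1))).congr_deriv ?_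
    rw [rpow_sub_one ht.ne']
    field_simp

lemma parabolicCylinderD_eq (l x : ℝ) :
    parabolicCylinderD l x = 1 / Gamma l * exp (-x ^ 2 / 4) * parabolicCylinderIntegral l x :=
  rfl

/-- `d/dx D_{-λ}(x) = −(x/2)·D_{-λ}(x) − λ·D_{-λ-1}(x)`. -/
theorem hasDerivAt_parabolicCylinderD (l : ℝ) (hl : 0 < l) (x : ℝ) :
    HasDerivAt (fun y => parabolicCylinderD l y)
      (-(x / 2) * parabolicCylinderD l x - l * parabolicCylinderD (l + 1) x) x := by
  have hGauss : HasDerivAt (fun y : ℝ => exp (-y ^ 2 / 4)) (exp (-x ^ 2 / 4) * -(x / 2)) x :=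
    ((hasDerivAt_pow 2 x).fun_neg.div_const 4).exp.congr_deriv (by ring)
  have hD := (hGauss.const_mul (1 / Gamma l)).mul (hasDerivAt_parabolicCylinderIntegral hl x)
  refine hD.congr_deriv ?_
  have hΓ : Gamma l ≠ 0 := (Gamma_pos_of_pos hl).ne'
  rw [parabolicCylinderD_eq, parabolicCylinderD_eq, Gamma_add_one hl.ne']
  field_simp
  ring
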